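/- Let (P,d) be a nonempty perfect complete metric space. Then for every countable ordinal α and every nonzero natural number p, there exists a compact countable subset K of P whose Cantor-Bendixson characteristic satisfies CB(K) = (α,p), i.e., α is the least ordinal with K^(α) finite and |K^(α)| = p. -/

import Mathlib

/-- The Cantor-Bendixson derivative of a set, by transfinite recursion. -/
noncomputable def cbDeriv {X : Type*} [TopologicalSpace X] (A : Set X) (o : Ordinal) : Set X :=
  Ordinal.limitRecOn o A (fun _ ih => derivedSet ih)
    (fun o _ ih => ⋂ (b : Set.Iio o), ih b.1 b.2)

/-- `IsCB A α p` : the Cantor-Bendixson characteristic of `A` is `(α, p)`,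
i.e. `α` is the least ordinal with `A^(α)` finite, and `p = |A^(α)|`. -/
def IsCB {X : Type*} [TopologicalSpace X] (A : Set X) (α : Ordinal) (p : ℕ) : Prop :=
  (cbDeriv A α).Finite ∧ (∀ β < α, ¬ (cbDeriv A β).Finite) ∧ (cbDeriv A α).ncard = p

/-!
Everything happens in Cantor space `ℕ → Bool`, which embeds as a closed subset of `P` since `P` is
perfect and complete; closed embeddings commute with Cantor–Bendixson derivatives.
Away from `⊤`, Cantor space is the disjoint union of the clopen copies `1ⁿ0·(ℕ → Bool)`, which
shrink to `⊤`. Derivatives are local, so the `α`-th derivative of the fan `{⊤} ∪ ⋃ₙ 1ⁿ0·Aₙ`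
consists of `⊤` and the copies of the `Aₙ^(α)`, as long as for every `β < α` infinitely many
`Aₙ^(β)` are nonempty. Taking `Aₙ^(βₙ) = {⊤}` along a sequence `(βₙ)` that hits every `β < α`
infinitely often (possible as `α` is countable) yields, by induction on `α`, a countable closed `K`
with `K^(α) = {⊤}`. Then `p` disjoint copies of `K` have an `α`-th derivative of size `p`, and no
earlier derivative is finite, since a finite derivative is followed by an empty one.
-/

open Set Filter Topology Function

section CantorBendixson

variable {X Y : Type*} [TopologicalSpace X] [TopologicalSpace Y]

@[simp] lemma cbDeriv_zero (A : Set X) : cbDeriv A 0 = A :=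
  Ordinal.limitRecOn_zero _ _ _

@[simp] lemma cbDeriv_add_one (A : Set X) (o : Ordinal) :
    cbDeriv A (o + 1) = derivedSet (cbDeriv A o) :=
  Ordinal.limitRecOn_add_one _ _ _ _

lemma cbDeriv_limit (A : Set X) {o : Ordinal} (ho : Order.IsSuccLimit o) :
    cbDeriv A o = ⋂ b : Iio o, cbDeriv A b :=
  Ordinal.limitRecOn_limit _ _ _ _ ho

lemma Topology.IsOpenEmbedding.preimage_derivedSet {f : Y → X} (hf : IsOpenEmbedding f)
    (A : Set X) : f ⁻¹' derivedSet A = derivedSet (f ⁻¹' A) := by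
  ext y
  rw [mem_preimage, mem_derivedSet, mem_derivedSet, ← comap_principal, hf.accPt_comap_iff]

lemma Topology.IsOpenEmbedding.preimage_cbDeriv {f : Y → X} (hf : IsOpenEmbedding f)
    (A : Set X) (o : Ordinal) : f ⁻¹' cbDeriv A o = cbDeriv (f ⁻¹' A) o := by
  induction o using Ordinal.limitRecOn with
  | zero => simp
  | add_one o ih => simp [hf.preimage_derivedSet, ih]
  | limit o ho ih =>
    simp_rw [cbDeriv_limit _ ho, preimage_iInter]
    exact iInter_congr fun b => ih b b.2

lemma Topology.IsEmbedding.preimage_derivedSet_image {f : Y → X} (hf : IsEmbedding f)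
    (A : Set Y) : f ⁻¹' derivedSet (f '' A) = derivedSet A := by
  ext y
  simp only [mem_preimage, mem_derivedSet, accPt_principal_iff_clusterPt,
    ← mem_closure_iff_clusterPt, hf.closure_eq_preimage_closure_image, ← image_singleton,
    ← image_sdiff hf.injective]

lemma Topology.IsClosedEmbedding.image_derivedSet {f : Y → X} (hf : IsClosedEmbedding f)
    (A : Set Y) : derivedSet (f '' A) = f '' derivedSet A := by
  have hsub : derivedSet (f '' A) ⊆ range f :=
    (derivedSet_subset_closure _).trans (closure_minimal (image_subset_range f A) hf.isClosed_range)
  rw [← hf.isEmbedding.preimage_derivedSet_image, image_preimage_eq_of_subset hsub]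

lemma Topology.IsClosedEmbedding.image_cbDeriv {f : Y → X} (hf : IsClosedEmbedding f)
    (A : Set Y) (o : Ordinal) : cbDeriv (f '' A) o = f '' cbDeriv A o := by
  induction o using Ordinal.limitRecOn with
  | zero => simp
  | add_one o ih => simp [hf.image_derivedSet, ih]
  | limit o ho ih =>
    have : Nonempty (Iio o) := ⟨⟨0, ho.bot_lt⟩⟩
    rw [cbDeriv_limit _ ho, cbDeriv_limit _ ho, hf.injective.injOn.image_iInter_eq]
    exact iInter_congr fun b => ih b b.2

variable [T1Space X]

lemma Set.Finite.derivedSet_eq_empty {A : Set X} (hA : A.Finite) : derivedSet A = ∅ := by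
  refine eq_empty_of_forall_notMem fun x hx => ?_
  rw [mem_derivedSet, accPt_principal_iff_clusterPt, ← mem_closure_iff_clusterPt,
    hA.sdiff.isClosed.closure_eq] at hx
  exact hx.2 rfl

lemma isClosed_cbDeriv {A : Set X} (hA : IsClosed A) (o : Ordinal) : IsClosed (cbDeriv A o) := by
  induction o using Ordinal.limitRecOn with
  | zero => simp [hA]
  | add_one o ih => simp [isClosed_derivedSet]
  | limit o ho ih => rw [cbDeriv_limit A ho]; exact isClosed_iInter fun b => ih b b.2

lemma cbDeriv_antitone {A : Set X} (hA : IsClosed A) : Antitone (cbDeriv A) := by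
  intro β γ hβγ
  induction γ using Ordinal.limitRecOn with
  | zero => rw [nonpos_iff_eq_zero.mp hβγ]
  | add_one γ ih =>
    rw [← Order.succ_eq_add_one] at hβγ ⊢
    rcases Order.le_succ_iff_eq_or_le.mp hβγ with rfl | hβγ
    · rfl
    · rw [Order.succ_eq_add_one, cbDeriv_add_one]
      exact ((isClosed_iff_derivedSet_subset _).mp (isClosed_cbDeriv hA γ)).trans (ih hβγ)
  | limit γ hγ ih =>
    rcases hβγ.eq_or_lt with rfl | hβγ
    · rfl
    · rw [cbDeriv_limit A hγ]
      exact iInter_subset (fun b : Iio γ => cbDeriv A b) ⟨β, hβγ⟩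

lemma cbDeriv_subset {A : Set X} (hA : IsClosed A) (o : Ordinal) : cbDeriv A o ⊆ A := by
  simpa using cbDeriv_antitone hA (zero_le (a := o))

@[simp] lemma cbDeriv_empty (o : Ordinal) : cbDeriv (∅ : Set X) o = ∅ :=
  subset_empty_iff.mp (cbDeriv_subset isClosed_empty o)

lemma cbDeriv_eq_empty_of_finite {A : Set X} (hA : IsClosed A) {β γ : Ordinal}
    (hfin : (cbDeriv A β).Finite) (hβγ : β < γ) : cbDeriv A γ = ∅ := by
  refine subset_empty_iff.mp <| (cbDeriv_antitone hA (Order.add_one_le_of_lt hβγ)).trans ?_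
  rw [cbDeriv_add_one, hfin.derivedSet_eq_empty]

lemma isCB_ncard {A : Set X} (hA : IsClosed A) {α : Ordinal} (hfin : (cbDeriv A α).Finite)
    (hne : (cbDeriv A α).Nonempty) : IsCB A α (cbDeriv A α).ncard :=
  ⟨hfin, fun _ hβ hβfin => hne.ne_empty (cbDeriv_eq_empty_of_finite hA hβfin hβ), rfl⟩

end CantorBendixson

lemma exists_seq_frequently_eq (T : Type*) [Countable T] [Nonempty T] :
    ∃ g : ℕ → T, ∀ t, ∃ᶠ n in atTop, g n = t := by
  obtain ⟨s, hs⟩ := exists_surjective_nat T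
  refine ⟨fun n => s n.unpair.1, fun t => frequently_atTop.mpr fun N => ?_⟩
  obtain ⟨k, rfl⟩ := hs t
  exact ⟨Nat.pair k N, Nat.right_le_pair k N, by simp⟩

lemma Ordinal.countable_Iio_of_lt_ord_aleph_one {α : Ordinal} (hα : α < (Cardinal.aleph 1).ord) :
    Countable (Iio α) := by
  rw [← Cardinal.mk_le_aleph0_iff, Cardinal.mk_Iio_ordinal, Cardinal.lift_le_aleph0,
    ← Cardinal.lt_aleph_one_iff]
  exact Cardinal.lt_ord.mp hα

namespace CantorSpace

/-- `emb n x` is the sequence `1ⁿ 0 x`. -/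
def emb (n : ℕ) (x : ℕ → Bool) : ℕ → Bool :=
  fun k => if k < n then true else if k = n then false else x (k - (n + 1))

lemma mem_range_emb {n : ℕ} {y : ℕ → Bool} :
    y ∈ range (emb n) ↔ (∀ k < n, y k = true) ∧ y n = false := by
  constructor
  · rintro ⟨x, rfl⟩
    exact ⟨fun k hk => by simp [emb, hk], by simp [emb]⟩
  · rintro ⟨hlt, heq⟩
    refine ⟨fun k => y (k + (n + 1)), funext fun k => ?_⟩
    rcases lt_trichotomy k n with hk | rfl | hk
    · simp [emb, hk, hlt k hk]
    · simp [emb, heq]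
    · simp [emb, hk.not_gt, hk.ne', Nat.sub_add_cancel (Nat.succ_le_of_lt hk)]

lemma emb_injective (n : ℕ) : Injective (emb n) := fun x y h => funext fun k => by
  have hk := congrFun h (k + (n + 1))
  simp only [emb] at hk
  simpa only [if_neg (show ¬k + (n + 1) < n by omega), if_neg (show k + (n + 1) ≠ n by omega),
    Nat.add_sub_cancel] using hk

lemma continuous_emb (n : ℕ) : Continuous (emb n) :=
  continuous_pi fun k => by
    unfold emb
    split_ifs
    exacts [continuous_const, continuous_const, continuous_apply _]

lemma isOpenEmbedding_emb (n : ℕ) : IsOpenEmbedding (emb n) := by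
  refine ⟨((continuous_emb n).isClosedEmbedding (emb_injective n)).isEmbedding, ?_⟩
  have : range (emb n) = (⋂ k ∈ Finset.range n, (· k) ⁻¹' {true}) ∩ (· n) ⁻¹' {false} := by
    ext y
    rw [mem_range_emb]
    simp
  rw [this]
  exact (isOpen_biInter_finset fun k _ => isOpen_discrete _ |>.preimage (continuous_apply k)).inter
    (isOpen_discrete _ |>.preimage (continuous_apply n))

lemma top_notMem_range_emb (n : ℕ) : ⊤ ∉ range (emb n) := by
  rw [mem_range_emb]
  simp

lemma eq_of_emb_eq {m n : ℕ} {x y : ℕ → Bool} (h : emb m x = emb n y) : m = n := by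
  wlog hmn : m < n generalizing m n x y
  · exact (le_of_not_gt hmn).lt_or_eq.elim (fun hnm => (this h.symm hnm).symm) Eq.symm
  have hm := congrFun h m
  simp [emb, hmn] at hm

lemma exists_emb_eq {y : ℕ → Bool} (hy : y ≠ ⊤) : ∃ n x, emb n x = y := by
  have hex : ∃ n, y n = false := by
    by_contra! h
    exact hy (funext fun n => by simpa using h n)
  exact ⟨Nat.find hex, mem_range_emb.mpr ⟨fun k hk => by simpa using Nat.find_min hex hk,
    Nat.find_spec hex⟩⟩

lemma tendsto_emb (x : ℕ → ℕ → Bool) : Tendsto (fun n => emb n (x n)) atTop (𝓝 ⊤) :=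
  tendsto_pi_nhds.mpr fun k => tendsto_const_nhds.congr' <|
    (eventually_gt_atTop k).mono fun n hn => by simp [emb, hn]


def glue (A : ℕ → Set (ℕ → Bool)) : Set (ℕ → Bool) := ⋃ n, emb n '' A n

def fan (A : ℕ → Set (ℕ → Bool)) : Set (ℕ → Bool) := insert ⊤ (glue A)

lemma preimage_emb_glue (A : ℕ → Set (ℕ → Bool)) (n : ℕ) : emb n ⁻¹' glue A = A n := by
  ext x
  simp only [glue, mem_preimage, mem_iUnion, mem_image]
  constructor
  · rintro ⟨m, x', hx', hx⟩
    obtain rfl := eq_of_emb_eq hx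
    exact emb_injective m hx ▸ hx'
  · exact fun hx => ⟨n, x, hx, rfl⟩

lemma top_notMem_glue (A : ℕ → Set (ℕ → Bool)) : ⊤ ∉ glue A := by
  simp only [glue, mem_iUnion]
  exact fun ⟨n, hn⟩ => top_notMem_range_emb n (image_subset_range _ _ hn)

lemma preimage_emb_fan (A : ℕ → Set (ℕ → Bool)) (n : ℕ) : emb n ⁻¹' fan A = A n := by
  rw [fan, insert_eq, preimage_union, preimage_emb_glue,
    preimage_singleton_eq_empty.mpr (top_notMem_range_emb n), empty_union]

lemma countable_glue {A : ℕ → Set (ℕ → Bool)} (hA : ∀ n, (A n).Countable) : (glue A).Countable :=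
  countable_iUnion fun n => (hA n).image _

lemma isCompact_glue {A : ℕ → Set (ℕ → Bool)} {p : ℕ} (hA : ∀ n, IsCompact (A n))
    (hp : ∀ n, p ≤ n → A n = ∅) : IsCompact (glue A) := by
  have : glue A = ⋃ n ∈ Finset.range p, emb n '' A n := by
    refine subset_antisymm (iUnion_subset fun n => ?_)
      (iUnion₂_subset fun n _ => subset_iUnion (fun n => emb n '' A n) n)
    rcases lt_or_ge n p with hn | hn
    · exact subset_biUnion_of_mem (u := fun n => emb n '' A n) (Finset.mem_range.mpr hn)
    · simp [hp n hn]
  rw [this]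
  exact (Finset.range p).isCompact_biUnion fun n _ => (hA n).image (continuous_emb n)

lemma isClosed_of_top_mem {S : Set (ℕ → Bool)} (hS : ⊤ ∈ S) (h : ∀ n, IsClosed (emb n ⁻¹' S)) :
    IsClosed S := by
  have : Sᶜ = ⋃ n, emb n '' (emb n ⁻¹' S)ᶜ := by
    ext y
    simp only [mem_compl_iff, mem_iUnion, mem_image, mem_preimage]
    constructor
    · intro hy
      obtain ⟨n, x, rfl⟩ := exists_emb_eq fun h : y = ⊤ => hy (h ▸ hS)
      exact ⟨n, x, hy, rfl⟩
    · rintro ⟨n, x, hx, rfl⟩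
      exact hx
  rw [← isOpen_compl_iff, this]
  exact isOpen_iUnion fun n => (isOpenEmbedding_emb n).isOpenMap _ (h n).isOpen_compl

lemma isClosed_fan {A : ℕ → Set (ℕ → Bool)} (hA : ∀ n, IsClosed (A n)) : IsClosed (fan A) :=
  isClosed_of_top_mem (mem_insert _ _) fun n => (preimage_emb_fan A n).symm ▸ hA n

lemma cbDeriv_diff_top (S : Set (ℕ → Bool)) (o : Ordinal) :
    cbDeriv S o \ {⊤} = glue fun n => cbDeriv (emb n ⁻¹' S) o := by
  ext y
  by_cases hy : y = ⊤
  · simp [hy, top_notMem_glue]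
  obtain ⟨n, x, rfl⟩ := exists_emb_eq hy
  rw [mem_sdiff_singleton, and_iff_left hy, ← mem_preimage (f := emb n),
    ← mem_preimage (f := emb n), preimage_emb_glue, (isOpenEmbedding_emb n).preimage_cbDeriv]

lemma cbDeriv_eq_glue {S : Set (ℕ → Bool)} (hS : IsClosed S) (htop : ⊤ ∉ S) (o : Ordinal) :
    cbDeriv S o = glue fun n => cbDeriv (emb n ⁻¹' S) o := by
  rw [← cbDeriv_diff_top, sdiff_singleton_eq_self fun h => htop (cbDeriv_subset hS o h)]

lemma top_mem_derivedSet_glue {B : ℕ → Set (ℕ → Bool)} (hB : ∃ᶠ n in atTop, (B n).Nonempty) :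
    ⊤ ∈ derivedSet (glue B) := by
  have : ∀ n, ∃ x, (B n).Nonempty → x ∈ B n := fun n => by
    by_cases h : (B n).Nonempty
    exacts [⟨h.some, fun _ => h.some_mem⟩, ⟨⊤, fun h' => (h h').elim⟩]
  choose x hx using this
  rw [mem_derivedSet, accPt_iff_frequently]
  refine (tendsto_emb x).frequently (hB.mono fun n hn => ⟨?_, ?_⟩)
  · exact fun h => top_notMem_range_emb n ⟨x n, h⟩
  · exact mem_iUnion.mpr ⟨n, mem_image_of_mem _ (hx n hn)⟩

lemma top_mem_cbDeriv_fan {A : ℕ → Set (ℕ → Bool)} {o : Ordinal}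
    (hA : ∀ β < o, ∃ᶠ n in atTop, (cbDeriv (A n) β).Nonempty) : ⊤ ∈ cbDeriv (fan A) o := by
  induction o using Ordinal.limitRecOn with
  | zero => simp [fan]
  | add_one o _ =>
    have hsub : (glue fun n => cbDeriv (A n) o) ⊆ cbDeriv (fan A) o := by
      simpa only [cbDeriv_diff_top, preimage_emb_fan] using
        sdiff_subset (s := cbDeriv (fan A) o) (t := {⊤})
    rw [cbDeriv_add_one]
    exact derivedSet_mono _ _ hsub
      (top_mem_derivedSet_glue (hA o (Order.lt_add_one_iff.mpr le_rfl)))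
  | limit o ho ih =>
    rw [cbDeriv_limit _ ho]
    exact mem_iInter.mpr fun b => ih b b.2 fun β hβ => hA β (hβ.trans b.2)

lemma cbDeriv_fan {A : ℕ → Set (ℕ → Bool)} {o : Ordinal}
    (hA : ∀ β < o, ∃ᶠ n in atTop, (cbDeriv (A n) β).Nonempty) :
    cbDeriv (fan A) o = insert ⊤ (glue fun n => cbDeriv (A n) o) := by
  rw [← insert_eq_of_mem (top_mem_cbDeriv_fan hA), ← insert_sdiff_singleton, cbDeriv_diff_top]
  simp only [preimage_emb_fan]

lemma exists_cbDeriv_eq_singleton_top {α : Ordinal} (hα : α < (Cardinal.aleph 1).ord) :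
    ∃ K : Set (ℕ → Bool), IsClosed K ∧ K.Countable ∧ cbDeriv K α = {⊤} := by
  induction α using WellFoundedLT.induction with | _ α ih =>
  rcases eq_or_ne α 0 with rfl | hα0
  · exact ⟨{⊤}, isClosed_singleton, countable_singleton _, cbDeriv_zero _⟩
  have := Ordinal.countable_Iio_of_lt_ord_aleph_one hα
  have : Nonempty (Iio α) := ⟨⟨0, pos_iff_ne_zero.mpr hα0⟩⟩
  obtain ⟨g, hg⟩ := exists_seq_frequently_eq (Iio α)
  choose K hK_closed hK_count hK using fun n => ih (g n) (g n).2 ((g n).2.trans hα)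
  have hfreq : ∀ β < α, ∃ᶠ n in atTop, (cbDeriv (K n) β).Nonempty := fun β hβ =>
    (hg ⟨β, hβ⟩).mono fun n hn => by
      rw [show β = g n from congrArg Subtype.val hn.symm, hK n]
      exact singleton_nonempty ⊤
  have hempty : ∀ n, cbDeriv (K n) α = ∅ := fun n =>
    cbDeriv_eq_empty_of_finite (hK_closed n) ((hK n).symm ▸ finite_singleton ⊤) (g n).2
  refine ⟨fan K, isClosed_fan hK_closed, (countable_glue hK_count).insert ⊤, ?_⟩
  simp [cbDeriv_fan hfreq, hempty, glue]

lemma exists_cbDeriv_eq_image_Iio {α : Ordinal} (hα : α < (Cardinal.aleph 1).ord) (p : ℕ) :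
    ∃ L : Set (ℕ → Bool), IsCompact L ∧ L.Countable ∧
      cbDeriv L α = (fun n => emb n ⊤) '' Iio p := by
  obtain ⟨K, hK_closed, hK_count, hK⟩ := exists_cbDeriv_eq_singleton_top hα
  set A : ℕ → Set (ℕ → Bool) := fun n => if n < p then K else ∅
  have hL : IsCompact (glue A) := by
    refine isCompact_glue (fun n => ?_) fun n hn => if_neg hn.not_gt
    by_cases hn : n < p <;> simp [A, hn, hK_closed.isCompact]
  refine ⟨glue A, hL, countable_glue fun n => ?_, ?_⟩
  · by_cases hn : n < p <;> simp [A, hn, hK_count]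
  rw [cbDeriv_eq_glue hL.isClosed (top_notMem_glue A)]
  simp only [preimage_emb_glue]
  ext y
  simp [glue, A, apply_ite (cbDeriv · α), hK]

end CantorSpace

theorem stmt12 {P : Type*} [MetricSpace P] [CompleteSpace P] [Nonempty P]
    (hperf : derivedSet (Set.univ : Set P) = Set.univ)
    (α : Ordinal) (hα : α < (Cardinal.aleph 1).ord) (p : ℕ) (hp : p ≠ 0) :
    ∃ K : Set P, IsCompact K ∧ K.Countable ∧ IsCB K α p := by
  obtain ⟨f, -, hf_cont, hf_inj⟩ :=
    (perfect_iff_eq_derivedSet.mpr hperf.symm).exists_nat_bool_injection univ_nonempty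
  obtain ⟨L, hL_compact, hL_count, hL⟩ := CantorSpace.exists_cbDeriv_eq_image_Iio hα p
  have hfL : cbDeriv (f '' L) α = (fun n => f (CantorSpace.emb n ⊤)) '' Iio p := by
    rw [(hf_cont.isClosedEmbedding hf_inj).image_cbDeriv, hL, image_image]
  have hinj : Injective fun n => f (CantorSpace.emb n ⊤) :=
    fun m n h => CantorSpace.eq_of_emb_eq (hf_inj h)
  have hfin : (cbDeriv (f '' L) α).Finite := hfL ▸ (finite_Iio p).image _
  have hne : (cbDeriv (f '' L) α).Nonempty :=
    hfL ▸ (show (Iio p).Nonempty from ⟨0, Nat.pos_of_ne_zero hp⟩).image _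
  refine ⟨f '' L, hL_compact.image hf_cont, hL_count.image f, ?_⟩
  simpa [hfL, ncard_image_of_injective _ hinj] using
    isCB_ncard (hL_compact.image hf_cont).isClosed hfin hne
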